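/- Let Ω ⊂ B(0,R) ⊂ ℝ^n be a domain for which the capacity lower bound cap_p(E,F;Ω) ≥ (1/C) · min{diam E, diam F} / R^{1+p−n} holds for all continua E, F ⊂ Ω with some constant C > 0 and n−1 < p ≤ n. Then ∂Ω is strongly accessible at every boundary point x₀ with respect to p-capacity. -/

import Mathlib

open Set Metric
open scoped ENNReal

/-- Let `Ω ⊆ B(0,R) ⊆ ℝⁿ` be a domain, `n-1 < p ≤ n`, and suppose the `p`-capacity
satisfies the lower bound `cap_p(E,F;Ω) ≥ (1/C)·min{diam E, diam F}/R^{1+p-n}` for all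
continua (compact connected sets) `E, F ⊆ Ω`, with some constant `C > 0`.  Then `∂Ω`
is strongly accessible at every boundary point `x₀` with respect to `p`-capacity:
for each neighborhood `U` of `x₀` with `∂U ∩ Ω ≠ ∅`, there exist a compact `E ⊆ Ω`,
a neighborhood `V ⊆ U` of `x₀` and `δ > 0` such that `cap_p(E,F;Ω) ≥ δ` for every
continuum `F ⊆ Ω` meeting both `∂U` and `∂V`. -/
theorem strongly_accessible_of_capacity_lower_bound {n : ℕ} (hn : 2 ≤ n)
    (R : ℝ) (hR : 0 < R)
    (Ω : Set (EuclideanSpace ℝ (Fin n))) (hΩo : IsOpen Ω) (hΩc : IsConnected Ω)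
    (hΩR : Ω ⊆ ball (0 : EuclideanSpace ℝ (Fin n)) R)
    (p : ℝ) (hp1 : (n : ℝ) - 1 < p) (hpn : p ≤ n)
    (cap : Set (EuclideanSpace ℝ (Fin n)) → Set (EuclideanSpace ℝ (Fin n)) → ℝ≥0∞)
    (C : ℝ) (hC : 0 < C)
    (hlow : ∀ E F : Set (EuclideanSpace ℝ (Fin n)),
      E ⊆ Ω → F ⊆ Ω → IsCompact E → IsConnected E → IsCompact F → IsConnected F →
      ENNReal.ofReal ((1 / C) * min (diam E) (diam F) / R ^ (1 + p - n)) ≤ cap E F) :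
    ∀ x₀ ∈ frontier Ω, ∀ U ∈ nhds x₀, (frontier U ∩ Ω).Nonempty →
      ∃ E : Set (EuclideanSpace ℝ (Fin n)), IsCompact E ∧ E ⊆ Ω ∧
        ∃ V ∈ nhds x₀, V ⊆ U ∧
          ∃ δ : ℝ≥0∞, 0 < δ ∧
            ∀ F : Set (EuclideanSpace ℝ (Fin n)),
              F ⊆ Ω → IsCompact F → IsConnected F →
              (F ∩ frontier U).Nonempty → (F ∩ frontier V).Nonempty →
              δ ≤ cap E F := by

  intro x₀ hx₀ U hU hUΩ
  -- ball around x₀ inside U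
  obtain ⟨ε, hε, hball⟩ := Metric.mem_nhds_iff.mp hU
  -- a point of Ω with a ball inside Ω
  obtain ⟨x, hx⟩ := hΩc.nonempty
  obtain ⟨r, hr, hrΩ⟩ := Metric.isOpen_iff.mp hΩo x hx
  have hn1 : 0 < n := by omega
  set i0 : Fin n := ⟨0, hn1⟩
  set v : EuclideanSpace ℝ (Fin n) := (r / 2) • EuclideanSpace.single i0 (1 : ℝ)
  have hv : ‖v‖ = r / 2 := by
    simp [v, norm_smul, EuclideanSpace.norm_single, abs_of_pos hr]
  set E : Set (EuclideanSpace ℝ (Fin n)) := closedBall x (r / 2)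
  have hEΩ : E ⊆ Ω := fun y hy => hrΩ (lt_of_le_of_lt (mem_closedBall.mp hy) (by linarith))
  have hEc : IsCompact E := isCompact_closedBall x (r / 2)
  have hxE : x ∈ E := mem_closedBall_self (by linarith)
  have hxvE : x + v ∈ E := by
    simp [E, mem_closedBall, dist_eq_norm, hv]
  have hEconn : IsConnected E := ⟨⟨x, hxE⟩, (convex_closedBall x (r / 2)).isPreconnected⟩
  have hEdiam : r / 2 ≤ diam E := by
    have := dist_le_diam_of_mem hEc.isBounded hxE hxvE
    rwa [dist_eq_norm, show x - (x + v) = -v by abel, norm_neg, hv] at this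
  refine ⟨E, hEc, hEΩ, ball x₀ (ε / 2), ball_mem_nhds _ (by linarith),
    (ball_subset_ball (by linarith)).trans hball,
    ENNReal.ofReal ((1 / C) * min (r / 2) (ε / 2) / R ^ (1 + p - n)), ?_, ?_⟩
  · apply ENNReal.ofReal_pos.mpr
    apply div_pos
    · exact mul_pos (by positivity) (lt_min (by linarith) (by linarith))
    · exact Real.rpow_pos_of_pos hR _
  · intro F hFΩ hFc hFconn ⟨y, hyF, hyU⟩ ⟨z, hzF, hzV⟩
    -- frontier U is disjoint from ball x₀ ε
    have hyfar : ε ≤ dist y x₀ := by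
      by_contra h
      push_neg at h
      exact hyU.2 (interior_maximal hball isOpen_ball (mem_ball.mpr h))
    have hznear : dist z x₀ = ε / 2 := by
      have := frontier_ball_subset_sphere hzV
      exact mem_sphere.mp this
    have hFdiam : ε / 2 ≤ diam F := by
      have h1 := dist_le_diam_of_mem hFc.isBounded hyF hzF
      have h2 : dist y x₀ ≤ dist y z + dist z x₀ := dist_triangle _ _ _
      linarith
    refine le_trans ?_ (hlow E F hEΩ hFΩ hEc hEconn hFc hFconn)
    apply ENNReal.ofReal_le_ofReal
    have hRp : (0:ℝ) < R ^ (1 + p - n) := Real.rpow_pos_of_pos hR _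
    have : min (r/2) (ε/2) ≤ min (diam E) (diam F) := min_le_min hEdiam hFdiam
    gcongr
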